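/- Let T be an abstract geometric type with binary incidence matrix, and suppose there exists M such that along both Γ(T)-orbits of (i₀,1) and (i₀,-1) the first coordinates agree up to step M, h_{i_m} = 1 for m < M, and h_{i_M} > 1. Then the first coordinates of Γ(T)^{M+1}(i₀,1) and Γ(T)^{M+1}(i₀,-1) differ. Consequently the map sending (i,δ) ∈ S(T) to the sequence of first coordinates of its Γ(T)-orbit is injective, provided every Γ(T)-orbit reaches an index with h > 1. -/
import Mathlib


/-- An abstract geometric type: `n` base rectangles, positive numbers `h i`,
`v i` of horizontal/vertical subrectangles, a bijection `ρ` from horizontal to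
vertical labels (the permutation part), and an orientation part `ε` valued in
`{-1, 1} ⊆ ℤ`. -/
structure GeoType (n : ℕ) where
  h : Fin n → ℕ
  v : Fin n → ℕ
  hpos : ∀ i, 0 < h i
  vpos : ∀ i, 0 < v i
  ρ : (Σ i : Fin n, Fin (h i)) ≃ (Σ k : Fin n, Fin (v k))
  ε : (Σ i : Fin n, Fin (h i)) → ℤ
  εval : ∀ x, ε x = 1 ∨ ε x = -1

/-- `θ(i, 1)` is the top horizontal label `(i, h i)` and `θ(i, δ)` for
`δ ≠ 1` (intended `δ = -1`) is the bottom label `(i, 1)` (0-indexed here). -/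
def GeoType.theta {n : ℕ} (T : GeoType n) (i : Fin n) (δ : ℤ) :
    Σ i : Fin n, Fin (T.h i) :=
  if δ = 1 then ⟨i, ⟨T.h i - 1, Nat.sub_lt (T.hpos i) Nat.one_pos⟩⟩
  else ⟨i, ⟨0, T.hpos i⟩⟩

/-- The s-generating function
`Γ(T)(i, δ) = (p₁(ρ(θ(i,δ))), δ · ε(θ(i,δ)))` on s-boundary labels. -/
def GeoType.Gamma {n : ℕ} (T : GeoType n) : Fin n × ℤ → Fin n × ℤ :=
  fun p => ((T.ρ (T.theta p.1 p.2)).1, p.2 * T.ε (T.theta p.1 p.2))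

lemma theta_congr {n : ℕ} (T : GeoType n) (i : Fin n) (hh : T.h i = 1) (δ δ' : ℤ) :
    T.theta i δ = T.theta i δ' := by
  unfold GeoType.theta
  split <;> split <;> exact congrArg (Sigma.mk i) (Fin.ext (by omega))

lemma sign_lem {n : ℕ} (T : GeoType n) (p : Fin n × ℤ) (hp : p.2 = 1 ∨ p.2 = -1) :
    ∀ m, ((T.Gamma)^[m] p).2 = 1 ∨ ((T.Gamma)^[m] p).2 = -1 := by
  intro m
  induction m with
  | zero => exact hp
  | succ m ih =>
    rw [Function.iterate_succ_apply']
    simp only [GeoType.Gamma]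
    rcases T.εval (T.theta ((T.Gamma)^[m] p).1 ((T.Gamma)^[m] p).2) with h2 | h2 <;>
      rw [h2] <;> rcases ih with h1 | h1 <;> rw [h1] <;> norm_num

lemma aux1 {n : ℕ} (T : GeoType n)
    (hbin : ∀ (i k : Fin n),
      (Finset.univ.filter (fun j : Fin (T.h i) => (T.ρ ⟨i, j⟩).1 = k)).card ≤ 1)
    (i₀ : Fin n) (M : ℕ)
    (hfst : ∀ m ≤ M,
        ((T.Gamma)^[m] (i₀, (1 : ℤ))).1 = ((T.Gamma)^[m] (i₀, (-1 : ℤ))).1)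
    (hone : ∀ m < M, T.h ((T.Gamma)^[m] (i₀, (1 : ℤ))).1 = 1)
    (hM : 1 < T.h ((T.Gamma)^[M] (i₀, (1 : ℤ))).1) :
    ((T.Gamma)^[M + 1] (i₀, (1 : ℤ))).1 ≠ ((T.Gamma)^[M + 1] (i₀, (-1 : ℤ))).1 := by
  have key : ∀ m ≤ M, (T.Gamma)^[m] (i₀, (-1 : ℤ)) =
      (((T.Gamma)^[m] (i₀, (1 : ℤ))).1, -((T.Gamma)^[m] (i₀, (1 : ℤ))).2) := by
    intro m hm
    induction m with
    | zero => simp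
    | succ m ih =>
      have hm' : m < M := by omega
      rw [Function.iterate_succ_apply', Function.iterate_succ_apply', ih (by omega)]
      set p := (T.Gamma)^[m] (i₀, (1 : ℤ)) with hp
      have hθ : T.theta p.1 (-p.2) = T.theta p.1 p.2 :=
        theta_congr T p.1 (hone m hm') _ _
      show T.Gamma (p.1, -p.2) = ((T.Gamma p).1, -(T.Gamma p).2)
      simp only [GeoType.Gamma, hθ]
      exact Prod.ext rfl (by ring)
  have hneg := key M le_rfl
  set p := (T.Gamma)^[M] (i₀, (1 : ℤ)) with hp
  rw [Function.iterate_succ_apply', Function.iterate_succ_apply', hneg]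
  have hs := sign_lem T (i₀, (1 : ℤ)) (Or.inl rfl) M
  rw [← hp] at hs
  intro hcon
  simp only [GeoType.Gamma] at hcon
  -- θ's with opposite signs
  have hθ : (T.theta p.1 p.2 = ⟨p.1, ⟨T.h p.1 - 1, Nat.sub_lt (T.hpos p.1) Nat.one_pos⟩⟩ ∧
      T.theta p.1 (-p.2) = ⟨p.1, ⟨0, T.hpos p.1⟩⟩) ∨
      (T.theta p.1 p.2 = ⟨p.1, ⟨0, T.hpos p.1⟩⟩ ∧
      T.theta p.1 (-p.2) = ⟨p.1, ⟨T.h p.1 - 1, Nat.sub_lt (T.hpos p.1) Nat.one_pos⟩⟩) := by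
    rcases hs with h1 | h1
    · left; constructor <;> simp [GeoType.theta, h1]
    · right; constructor <;> simp [GeoType.theta, h1]
  set j₁ : Fin (T.h p.1) := ⟨T.h p.1 - 1, Nat.sub_lt (T.hpos p.1) Nat.one_pos⟩
  set j₂ : Fin (T.h p.1) := ⟨0, T.hpos p.1⟩
  have hjne : j₁ ≠ j₂ := by
    simp only [j₁, j₂, Ne, Fin.mk.injEq]
    omega
  set k := (T.ρ (T.theta p.1 p.2)).1 with hk
  have h2 : 1 < (Finset.univ.filter (fun j : Fin (T.h p.1) => (T.ρ ⟨p.1, j⟩).1 = k)).card := by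
    rcases hθ with ⟨h1, h2⟩ | ⟨h1, h2⟩
    · refine Finset.one_lt_card.mpr ⟨j₁, ?_, j₂, ?_, hjne⟩ <;>
        simp only [Finset.mem_filter, Finset.mem_univ, true_and]
      · rw [← h1]
      · rw [← h2, ← hcon]
    · refine Finset.one_lt_card.mpr ⟨j₁, ?_, j₂, ?_, hjne⟩ <;>
        simp only [Finset.mem_filter, Finset.mem_univ, true_and]
      · rw [← h2, ← hcon]
      · rw [← h1]
  exact absurd (hbin p.1 k) (by omega)

/-- With a binary incidence matrix: (1) if the `Γ(T)`-orbits of `(i₀,1)` and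
`(i₀,-1)` agree in first coordinate up to step `M`, with `h = 1` before step
`M` and `h > 1` at step `M`, then the first coordinates at step `M + 1`
differ. (2) Consequently, provided every orbit reaches an index with `h > 1`,
the map sending an s-boundary label to the sequence of first coordinates of
its `Γ(T)`-orbit is injective. -/
theorem stmt8 (n : ℕ) (T : GeoType n)
    (hbin : ∀ (i k : Fin n),
      (Finset.univ.filter (fun j : Fin (T.h i) => (T.ρ ⟨i, j⟩).1 = k)).card ≤ 1) :
    (∀ (i₀ : Fin n) (M : ℕ),
      (∀ m ≤ M,
        ((T.Gamma)^[m] (i₀, (1 : ℤ))).1 = ((T.Gamma)^[m] (i₀, (-1 : ℤ))).1) →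
      (∀ m < M, T.h ((T.Gamma)^[m] (i₀, (1 : ℤ))).1 = 1) →
      1 < T.h ((T.Gamma)^[M] (i₀, (1 : ℤ))).1 →
      ((T.Gamma)^[M + 1] (i₀, (1 : ℤ))).1 ≠ ((T.Gamma)^[M + 1] (i₀, (-1 : ℤ))).1) ∧
    ((∀ (i : Fin n) (δ : ℤ), (δ = 1 ∨ δ = -1) →
        ∃ m : ℕ, 1 < T.h ((T.Gamma)^[m] (i, δ)).1) →
      ∀ (i i' : Fin n) (δ δ' : ℤ), (δ = 1 ∨ δ = -1) → (δ' = 1 ∨ δ' = -1) →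
        (∀ m : ℕ, ((T.Gamma)^[m] (i, δ)).1 = ((T.Gamma)^[m] (i', δ')).1) →
        (i, δ) = (i', δ')) := by
  refine ⟨fun i₀ M hfst hone hM => aux1 T hbin i₀ M hfst hone hM, ?_⟩
  intro hall i i' δ δ' hδ hδ' heq
  have hi : i = i' := by simpa using heq 0
  subst hi
  rcases hδ with rfl | rfl <;> rcases hδ' with rfl | rfl
  · rfl
  · exfalso
    have hex := hall i 1 (Or.inl rfl)
    set M := Nat.find hex with hMdef
    exact aux1 T hbin i M (fun m _ => heq m)
      (fun m hm => by
        have h1 := Nat.find_min hex hm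
        have h2 := T.hpos ((T.Gamma)^[m] (i, (1 : ℤ))).1
        omega)
      (Nat.find_spec hex) (heq (M + 1))
  · exfalso
    have hex := hall i 1 (Or.inl rfl)
    set M := Nat.find hex with hMdef
    exact aux1 T hbin i M (fun m _ => (heq m).symm)
      (fun m hm => by
        have h1 := Nat.find_min hex hm
        have h2 := T.hpos ((T.Gamma)^[m] (i, (1 : ℤ))).1
        omega)
      (Nat.find_spec hex) ((heq (M + 1)).symm)
  · rfl
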